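/- Let G be a complete graph on vertex classes V_1,...,V_k of equal size with metric weights w. Define a complete graph G' on vertex set {V_1,...,V_k} with weight w'(V_i, V_j) equal to the weight of a minimum-cost perfect matching between V_i and V_j in G. Then w' satisfies the triangle inequality: w'(V_i, V_j) ≤ w'(V_i, V_l) + w'(V_l, V_j) for all distinct i, j, l. -/
import Mathlib


/-- The minimum-weight perfect-matching distance between color classes
satisfies the triangle inequality: with w'(i,j) the minimum over all
bijections between class i and class j of the sum of matched-pair weights,
w'(i,j) ≤ w'(i,l) + w'(l,j) for distinct i, j, l. -/
theorem stmt_5 {V : Type*} [Fintype V] (k : ℕ)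
    (w : V → V → ℝ)
    (hnn : ∀ u v, 0 ≤ w u v)
    (hsym : ∀ u v, w u v = w v u)
    (htri : ∀ u v x, w u v ≤ w u x + w x v)
    (c : V → Fin k)
    (hsize : ∀ i j : Fin k,
      Fintype.card {v // c v = i} = Fintype.card {v // c v = j}) :
    ∀ i j l : Fin k, i ≠ j → j ≠ l → i ≠ l →
      (⨅ f : {v // c v = i} ≃ {v // c v = j}, ∑ v : {v // c v = i}, w v (f v)) ≤
        (⨅ f : {v // c v = i} ≃ {v // c v = l}, ∑ v : {v // c v = i}, w v (f v)) +
        (⨅ f : {v // c v = l} ≃ {v // c v = j}, ∑ v : {v // c v = l}, w v (f v)) := by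
  intro i j l _ _ _
  have hil : Nonempty ({v // c v = i} ≃ {v // c v = l}) :=
    ⟨Fintype.equivOfCardEq (hsize i l)⟩
  have hlj : Nonempty ({v // c v = l} ≃ {v // c v = j}) :=
    ⟨Fintype.equivOfCardEq (hsize l j)⟩
  obtain ⟨g, hg⟩ := Finite.exists_min
    (fun f : {v // c v = i} ≃ {v // c v = l} => ∑ v : {v // c v = i}, w v (f v))
  obtain ⟨h, hh⟩ := Finite.exists_min
    (fun f : {v // c v = l} ≃ {v // c v = j} => ∑ v : {v // c v = l}, w v (f v))
  have e1 : (⨅ f : {v // c v = i} ≃ {v // c v = l}, ∑ v : {v // c v = i}, w v (f v))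
      = ∑ v : {v // c v = i}, w v (g v) :=
    le_antisymm (ciInf_le (Finite.bddBelow_range _) g) (le_ciInf hg)
  have e2 : (⨅ f : {v // c v = l} ≃ {v // c v = j}, ∑ v : {v // c v = l}, w v (f v))
      = ∑ v : {v // c v = l}, w v (h v) :=
    le_antisymm (ciInf_le (Finite.bddBelow_range _) h) (le_ciInf hh)
  rw [e1, e2]
  calc (⨅ f : {v // c v = i} ≃ {v // c v = j}, ∑ v : {v // c v = i}, w v (f v))
      ≤ ∑ v : {v // c v = i}, w v ((g.trans h) v) :=
        ciInf_le (Finite.bddBelow_range _) (g.trans h)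
    _ ≤ ∑ v : {v // c v = i}, (w v (g v) + w (g v) (h (g v))) := by
        apply Finset.sum_le_sum
        intro v _
        exact htri _ _ _
    _ = ∑ v : {v // c v = i}, w v (g v) + ∑ v : {v // c v = i}, w (g v) (h (g v)) :=
        Finset.sum_add_distrib
    _ = ∑ v : {v // c v = i}, w v (g v) + ∑ v : {v // c v = l}, w v (h v) := by
        rw [Equiv.sum_comp g (fun u => w u (h u))]
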